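/- arXiv:1405.2985 — 7 statements merged into one kernel-verified Lean document; each statement's English description precedes it below -/
import Mathlib

section
/- Let U, X, Y be Hilbert spaces, A : Y → X and B : U → X bounded linear operators. There exists a bounded linear operator X₀ : U → Y with A ∘ X₀ = B and ‖X₀‖ ≤ 1 if and only if B B* ≤ A A* (as positive operators on X). -/
open ContinuousLinearMap

/-!
The inequality `B B* ≤ A A*` says exactly that `‖B* x‖ ≤ ‖A* x‖` for all `x`. Such a domination
is equivalent to a factorization `B* = C A*` through a contraction `C`: set `C (A* x) := B* x` on
the range of `A*`, extend by continuity to its closure and by zero on the orthogonal complement.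
Then `X₀ := C*` is the required contraction with `A X₀ = B`.
-/

theorem LinearMap.denseRange_codRestrict_topologicalClosure_range {R X Y : Type*} [Semiring R]
    [AddCommMonoid X] [Module R X] [AddCommMonoid Y] [Module R Y] [TopologicalSpace Y]
    [ContinuousAdd Y] [ContinuousConstSMul R Y] (T : X →ₗ[R] Y) :
    DenseRange (T.codRestrict (range T).topologicalClosure
      fun x => (range T).le_topologicalClosure (mem_range_self T x)) := by
  refine Subtype.dense_iff.2 fun y hy => ?_
  rwa [← Set.range_comp]

section Factorization

variable {𝕜 X Y U : Type*} [RCLike 𝕜] [AddCommGroup X] [Module 𝕜 X]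
  [NormedAddCommGroup Y] [InnerProductSpace 𝕜 Y] [CompleteSpace Y]
  [NormedAddCommGroup U] [NormedSpace 𝕜 U] [CompleteSpace U]

theorem LinearMap.exists_comp_eq_of_norm_le {T : X →ₗ[𝕜] Y} {S : X →ₗ[𝕜] U}
    (h : ∀ x, ‖S x‖ ≤ ‖T x‖) : ∃ C : Y →L[𝕜] U, (C : Y →ₗ[𝕜] U) ∘ₗ T = S ∧ ‖C‖ ≤ 1 := by
  set K := (range T).topologicalClosure
  have : CompleteSpace K := (range T).isClosed_topologicalClosure.completeSpace_coe
  set e : X →ₗ[𝕜] K :=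
    T.codRestrict K fun x => (range T).le_topologicalClosure (mem_range_self T x)
  have he : DenseRange e := T.denseRange_codRestrict_topologicalClosure_range
  have hSe : ∀ x, ‖S x‖ ≤ 1 * ‖e x‖ := fun x => by rw [one_mul]; exact h x
  refine ⟨S.extendOfNorm e ∘L K.orthogonalProjectionOnto, ?_, ?_⟩
  · ext x
    have hx : K.orthogonalProjectionOnto (T x) = e x :=
      K.orthogonalProjectionOnto_mem_subspace_eq_self (e x)
    simp [hx, extendOfNorm_eq he ⟨1, hSe⟩]
  · calc ‖S.extendOfNorm e ∘L K.orthogonalProjectionOnto‖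
        ≤ ‖S.extendOfNorm e‖ * ‖K.orthogonalProjectionOnto‖ := opNorm_comp_le _ _
      _ ≤ 1 * 1 := by
        gcongr
        · exact opNorm_extendOfNorm_le he zero_le_one hSe
        · exact K.orthogonalProjectionOnto_norm_le
      _ = 1 := one_mul 1

theorem ContinuousLinearMap.exists_comp_eq_and_norm_le_one_iff [TopologicalSpace X]
    (T : X →L[𝕜] Y) (S : X →L[𝕜] U) :
    (∃ C : Y →L[𝕜] U, C ∘L T = S ∧ ‖C‖ ≤ 1) ↔ ∀ x, ‖S x‖ ≤ ‖T x‖ := by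
  constructor
  · rintro ⟨C, rfl, hC⟩ x
    simpa using C.le_of_opNorm_le hC (T x)
  · intro h
    obtain ⟨C, hCT, hC⟩ :=
      LinearMap.exists_comp_eq_of_norm_le (T := (T : X →ₗ[𝕜] Y)) (S := (S : X →ₗ[𝕜] U)) h
    exact ⟨C, coe_injective hCT, hC⟩

end Factorization

theorem ContinuousLinearMap.isPositive_comp_adjoint_sub_iff {𝕜 X Y U : Type*} [RCLike 𝕜]
    [NormedAddCommGroup X] [InnerProductSpace 𝕜 X] [CompleteSpace X]
    [NormedAddCommGroup Y] [InnerProductSpace 𝕜 Y] [CompleteSpace Y]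
    [NormedAddCommGroup U] [InnerProductSpace 𝕜 U] [CompleteSpace U]
    (A : Y →L[𝕜] X) (B : U →L[𝕜] X) :
    (A ∘L adjoint A - B ∘L adjoint B).IsPositive ↔ ∀ x, ‖adjoint B x‖ ≤ ‖adjoint A x‖ := by
  have hsa : IsSelfAdjoint (A ∘L adjoint A - B ∘L adjoint B) :=
    (isPositive_self_comp_adjoint A).isSelfAdjoint.sub
      (isPositive_self_comp_adjoint B).isSelfAdjoint
  have hre : ∀ x, (A ∘L adjoint A - B ∘L adjoint B).reApplyInnerSelf x =
      ‖adjoint A x‖ ^ 2 - ‖adjoint B x‖ ^ 2 := by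
    intro x
    simp only [apply_norm_sq_eq_inner_adjoint_left, adjoint_adjoint, reApplyInnerSelf,
      sub_apply, inner_sub_left, map_sub]
  simp only [isPositive_def', hsa, true_and, hre, sub_nonneg]
  exact forall_congr' fun x => sq_le_sq₀ (norm_nonneg _) (norm_nonneg _)

/-- Douglas factorization with norm constraint. -/
theorem douglas_factorization_norm_constraint
    {U X Y : Type*}
    [NormedAddCommGroup U] [InnerProductSpace ℂ U] [CompleteSpace U]
    [NormedAddCommGroup X] [InnerProductSpace ℂ X] [CompleteSpace X]
    [NormedAddCommGroup Y] [InnerProductSpace ℂ Y] [CompleteSpace Y]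
    (A : Y →L[ℂ] X) (B : U →L[ℂ] X) :
    (∃ X₀ : U →L[ℂ] Y, A ∘L X₀ = B ∧ ‖X₀‖ ≤ 1) ↔
      (A ∘L ContinuousLinearMap.adjoint A - B ∘L ContinuousLinearMap.adjoint B).IsPositive := by
  have hadj : ∀ C : Y →L[ℂ] U, A ∘L adjoint C = B ↔ C ∘L adjoint A = adjoint B := fun C => by
    rw [← adjoint.injective.eq_iff, adjoint_comp, adjoint_adjoint]
  calc (∃ X₀ : U →L[ℂ] Y, A ∘L X₀ = B ∧ ‖X₀‖ ≤ 1)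
      ↔ ∃ C : Y →L[ℂ] U, C ∘L adjoint A = adjoint B ∧ ‖C‖ ≤ 1 :=
        adjoint.surjective.exists.trans <| exists_congr fun C =>
          and_congr (hadj C) (by rw [LinearIsometryEquiv.norm_map])
    _ ↔ ∀ x, ‖adjoint B x‖ ≤ ‖adjoint A x‖ := exists_comp_eq_and_norm_le_one_iff _ _
    _ ↔ _ := (isPositive_comp_adjoint_sub_iff A B).symm
end

section
/- Let U, X, Y be Hilbert spaces, A : Y → X, B : U → X bounded operators with B B* ≤ A A*, and let X₀ : U → Y be a bounded operator. Then A ∘ X₀ = B and ‖X₀‖ ≤ 1 holds if and only if the 3×3 block operator [[I_U, B*, X₀*], [B, A A*, A], [X₀, A*, I_Y]] on U ⊕ X ⊕ Y is positive semidefinite. -/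
open ContinuousLinearMap RCLike

/-!
Completing the square in the `y`-variable, the quadratic form of the block operator at `(u, x, y)`
equals `‖X₀ u + A* x + y‖² + ‖u‖² - ‖X₀ u‖² + 2 Re ⟪(B - A X₀) u, x⟫`. Choosing
`y = -(X₀ u + A* x)`, nonnegativity for all `(u, x, y)` becomes nonnegativity of
`‖u‖² - ‖X₀ u‖² + 2 Re ⟪(B - A X₀) u, x⟫` for all `(u, x)`. Since this is affine in `x`, it forces
`(B - A X₀) u = 0`, and at `x = 0` it says `‖X₀ u‖ ≤ ‖u‖`.
-/

section

variable {𝕜 : Type*} [RCLike 𝕜]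

theorem eq_zero_of_forall_nonneg_add_re_inner {E : Type*} [NormedAddCommGroup E]
    [InnerProductSpace 𝕜 E] (c : ℝ) (w : E) (h : ∀ x : E, 0 ≤ c + 2 * re (inner 𝕜 w x)) :
    w = 0 := by
  by_contra hw
  have hw2 : 0 < ‖w‖ ^ 2 := by positivity
  set t : ℝ := (|c| + 1) / (2 * ‖w‖ ^ 2)
  have hx : re (inner 𝕜 w ((-t : 𝕜) • w)) = -t * ‖w‖ ^ 2 := by
    rw [inner_smul_right, inner_self_eq_norm_sq_to_K]
    norm_cast
  have hneg := h ((-t : 𝕜) • w)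
  rw [hx] at hneg
  have ht : 2 * (t * ‖w‖ ^ 2) = |c| + 1 := by simp only [t]; field_simp
  linarith [le_abs_self c]

variable {U E F : Type*}
  [NormedAddCommGroup U] [InnerProductSpace 𝕜 U]
  [NormedAddCommGroup E] [InnerProductSpace 𝕜 E]
  [NormedAddCommGroup F] [InnerProductSpace 𝕜 F]

theorem forall_nonneg_add_re_inner_iff (T : U →L[𝕜] F) (S : U →L[𝕜] E) :
    (∀ u x, 0 ≤ ‖u‖ ^ 2 - ‖T u‖ ^ 2 + 2 * re (inner 𝕜 (S u) x)) ↔ S = 0 ∧ ‖T‖ ≤ 1 := by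
  constructor
  · intro h
    refine ⟨ext fun u => eq_zero_of_forall_nonneg_add_re_inner _ _ (h u), ?_⟩
    refine T.opNorm_le_bound zero_le_one fun u => ?_
    have hsq := h u 0
    rw [inner_zero_right, map_zero, mul_zero, add_zero, sub_nonneg] at hsq
    simpa using (sq_le_sq₀ (norm_nonneg _) (norm_nonneg _)).mp hsq
  · rintro ⟨rfl, hT⟩ u x
    have hTu : ‖T u‖ ≤ ‖u‖ := T.le_of_opNorm_le hT u |>.trans_eq (one_mul _)
    simp only [zero_apply, inner_zero_left, map_zero, mul_zero, add_zero, sub_nonneg]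
    gcongr

theorem forall_nonneg_norm_add_sq_add_iff {α β G : Type*} [SeminormedAddCommGroup G]
    (g : α → β → G) (r : α → β → ℝ) :
    (∀ a b (y : G), 0 ≤ ‖g a b + y‖ ^ 2 + r a b) ↔ ∀ a b, 0 ≤ r a b :=
  ⟨fun h a b => by simpa using h a b (-g a b), fun h a b _ => add_nonneg (sq_nonneg _) (h a b)⟩

variable [CompleteSpace U] [CompleteSpace E] [CompleteSpace F]

theorem re_block_quadratic_form_eq (A : F →L[𝕜] E) (B : U →L[𝕜] E) (X₀ : U →L[𝕜] F)
    (u : U) (x : E) (y : F) :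
    re (inner 𝕜 (u + adjoint B x + adjoint X₀ y) u + inner 𝕜 (B u + (A ∘L adjoint A) x + A y) x
        + inner 𝕜 (X₀ u + adjoint A x + y) y)
      = ‖X₀ u + adjoint A x + y‖ ^ 2
        + (‖u‖ ^ 2 - ‖X₀ u‖ ^ 2 + 2 * re (inner 𝕜 ((B - A ∘L X₀) u) x)) := by
  rw [← inner_self_eq_norm_sq (𝕜 := 𝕜), ← inner_self_eq_norm_sq (𝕜 := 𝕜) u,
    ← inner_self_eq_norm_sq (𝕜 := 𝕜) (X₀ u)]
  simp only [inner_add_left, inner_add_right, inner_sub_left, sub_apply, comp_apply,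
    adjoint_inner_left, adjoint_inner_right, map_add, map_sub]
  rw [← inner_re_symm (𝕜 := 𝕜) x (A (X₀ u)), ← inner_re_symm (𝕜 := 𝕜) x (B u)]
  ring

end

theorem solutions_iff_block_positive_general
    {U X Y : Type*}
    [NormedAddCommGroup U] [InnerProductSpace ℂ U] [CompleteSpace U]
    [NormedAddCommGroup X] [InnerProductSpace ℂ X] [CompleteSpace X]
    [NormedAddCommGroup Y] [InnerProductSpace ℂ Y] [CompleteSpace Y]
    (A : Y →L[ℂ] X) (B : U →L[ℂ] X) (X₀ : U →L[ℂ] Y) :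
    (A ∘L X₀ = B ∧ ‖X₀‖ ≤ 1) ↔
      (∀ (u : U) (x : X) (y : Y),
        0 ≤ (inner ℂ (u + (ContinuousLinearMap.adjoint B) x
                      + (ContinuousLinearMap.adjoint X₀) y) u
              + inner ℂ (B u + (A ∘L ContinuousLinearMap.adjoint A) x + A y) x
              + inner ℂ (X₀ u + (ContinuousLinearMap.adjoint A) x + y) y : ℂ).re) := by
  simp_rw [← RCLike.re_to_complex, re_block_quadratic_form_eq,
    forall_nonneg_norm_add_sq_add_iff (fun u x => X₀ u + adjoint A x),
    forall_nonneg_add_re_inner_iff, sub_eq_zero, eq_comm]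

/-- Characterization of solutions of `A X₀ = B`, `‖X₀‖ ≤ 1` via positivity of the 3×3 block
operator `[[I, B*, X₀*], [B, AA*, A], [X₀, A*, I]]` on `U ⊕ X ⊕ Y`; the positivity of the block
operator is expressed through its quadratic form. -/
theorem solutions_iff_block_positive
    {U X Y : Type*}
    [NormedAddCommGroup U] [InnerProductSpace ℂ U] [CompleteSpace U]
    [NormedAddCommGroup X] [InnerProductSpace ℂ X] [CompleteSpace X]
    [NormedAddCommGroup Y] [InnerProductSpace ℂ Y] [CompleteSpace Y]
    (A : Y →L[ℂ] X) (B : U →L[ℂ] X) (X₀ : U →L[ℂ] Y)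
    (hAB : (A ∘L ContinuousLinearMap.adjoint A - B ∘L ContinuousLinearMap.adjoint B).IsPositive) :
    (A ∘L X₀ = B ∧ ‖X₀‖ ≤ 1) ↔
      (∀ (u : U) (x : X) (y : Y),
        0 ≤ (inner ℂ (u + (ContinuousLinearMap.adjoint B) x
                      + (ContinuousLinearMap.adjoint X₀) y) u
              + inner ℂ (B u + (A ∘L ContinuousLinearMap.adjoint A) x + A y) x
              + inner ℂ (X₀ u + (ContinuousLinearMap.adjoint A) x + y) y : ℂ).re) :=
  solutions_iff_block_positive_general A B X₀
end

section
/- Let X be a finite-dimensional Hilbert space, J a self-adjoint unitary (signature operator) on a Hilbert space K₀, C : X → K₀ a bounded operator, T : X → X, and P : X → X a strictly positive operator satisfying P − T* P T = C* J C. Suppose μ is a unimodular complex number with μ I − T* invertible. Define Θ(z) = I + (z − μ) C (I − z T)^{-1} P^{-1} (μ I − T*)^{-1} C* J for z in the unit disk. Then for all z, ζ in the unit disk, (J − Θ(z) J Θ(ζ)*)/(1 − z ζ̄) = C (I − z T)^{-1} P^{-1} (I − ζ̄ T*)^{-1} C*. -/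
/-!
Expanding `Θ(z) J Θ(ζ)*` with `J² = 1`, the kernel becomes `-C X C*`, where `X` is a sum of
three products of `(I - zT)⁻¹`, `P⁻¹`, `(μ - T*)⁻¹`, `(μ̄ - T)⁻¹`, `(I - ζ̄T*)⁻¹`, the middle
factor of the third being `C* J C = P - T* P T` by the Stein equation. Multiplying out the five
inverses turns the claim into a polynomial identity in `T`, `T*` and `P`, which holds because
`μ μ̄ = 1`.
-/

open ContinuousLinearMap
open scoped Ring InnerProduct ComplexConjugate

theorem stein_resolvent_identity {𝕜 R : Type*} [CommRing 𝕜] [Ring R] [Algebra 𝕜 R]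
    {T T' P : R} {z ζ μ μ' : 𝕜} (hμ : μ * μ' = 1)
    (hu : IsUnit (1 - z • T)) (hv : IsUnit (1 - ζ • T')) (hm : IsUnit (μ • 1 - T'))
    (hm' : IsUnit (μ' • 1 - T)) (hP : IsUnit P) :
    (z - μ) • ((1 - z • T)⁻¹ʳ * P⁻¹ʳ * (μ • 1 - T')⁻¹ʳ)
      + (ζ - μ') • ((μ' • 1 - T)⁻¹ʳ * P⁻¹ʳ * (1 - ζ • T')⁻¹ʳ)
      + ((ζ - μ') * (z - μ)) • ((1 - z • T)⁻¹ʳ * P⁻¹ʳ * (μ • 1 - T')⁻¹ʳ * (P - T' * P * T)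
          * ((μ' • 1 - T)⁻¹ʳ * P⁻¹ʳ * (1 - ζ • T')⁻¹ʳ))
      = -(1 - z * ζ) • ((1 - z • T)⁻¹ʳ * P⁻¹ʳ * (1 - ζ • T')⁻¹ʳ) := by
  have poly : (z - μ) • ((1 - ζ • T') * P * (μ' • 1 - T))
      + (ζ - μ') • ((μ • 1 - T') * P * (1 - z • T))
      + ((ζ - μ') * (z - μ)) • (P - T' * P * T)
      = -(1 - z * ζ) • ((μ • 1 - T') * P * (μ' • 1 - T)) := by
    simp only [mul_sub, sub_mul, mul_one, one_mul, smul_sub, smul_mul_assoc, mul_smul_comm,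
      smul_smul, mul_assoc]
    -- coefficients of `P`, `T' * P`, `P * T` and `T' * P * T`
    match_scalars
    · linear_combination -(z * ζ) * hμ
    · linear_combination ζ * hμ
    · linear_combination z * hμ
    · linear_combination -hμ
  have := congrArg (fun q => (1 - z • T)⁻¹ʳ * P⁻¹ʳ * (μ • 1 - T')⁻¹ʳ * q
    * ((μ' • 1 - T)⁻¹ʳ * P⁻¹ʳ * (1 - ζ • T')⁻¹ʳ)) poly
  simpa only [mul_add, add_mul, mul_smul_comm, smul_mul_assoc, mul_assoc,
    Ring.inverse_mul_cancel_left _ _ hu, Ring.inverse_mul_cancel_left _ _ hm,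
    Ring.inverse_mul_cancel_left _ _ hP, Ring.mul_inverse_cancel_left _ _ hm',
    Ring.mul_inverse_cancel_left _ _ hP, Ring.mul_inverse_cancel _ hv, mul_one] using this

namespace ContinuousLinearMap

lemma isUnit_of_coercive {𝕜 E : Type*} [RCLike 𝕜] [NormedAddCommGroup E]
    [InnerProductSpace 𝕜 E] [FiniteDimensional 𝕜 E] {P : E →L[𝕜] E} {c : ℝ} (hc : 0 < c)
    (hP : ∀ x, c * ‖x‖ ^ 2 ≤ RCLike.re (inner 𝕜 (P x) x)) : IsUnit P := by
  have := FiniteDimensional.complete 𝕜 E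
  rw [isUnit_iff_isUnit_toLinearMap, LinearMap.isUnit_iff_ker_eq_bot, LinearMap.ker_eq_bot']
  intro x hx
  have hx0 : c * ‖x‖ ^ 2 ≤ 0 := by simpa [show P x = 0 from hx] using hP x
  simpa using nonpos_of_mul_nonpos_right hx0 hc

variable {𝕜 E K : Type*} [RCLike 𝕜] [NormedAddCommGroup E] [InnerProductSpace 𝕜 E]
  [CompleteSpace E] [NormedAddCommGroup K] [InnerProductSpace 𝕜 K] [CompleteSpace K]

lemma adjoint_ringInverse (A : E →L[𝕜] E) : (A⁻¹ʳ)† = (A†)⁻¹ʳ := by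
  simpa only [star_eq_adjoint] using (Ring.inverse_star A).symm

lemma sub_comp_one_add_comp_adjoint {J : K →L[𝕜] K} (hJ : IsSelfAdjoint J) (hJ2 : J ∘L J = 1)
    (C : E →L[𝕜] K) (F G : E →L[𝕜] E) :
    J - (1 + C ∘L F ∘L C† ∘L J) ∘L J ∘L (1 + C ∘L G ∘L C† ∘L J)†
      = -(C ∘L (F + G† + F ∘L (C† ∘L J ∘L C) ∘L G†) ∘L C†) := by
  have hJJ (f : K →L[𝕜] K) : J ∘L J ∘L f = f := by rw [← comp_assoc, hJ2, one_def, id_comp]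
  rw [map_add, adjoint_one]
  simp only [adjoint_comp, adjoint_adjoint, hJ.adjoint_eq, add_comp, comp_add, one_def, id_comp,
    comp_id, comp_assoc, hJ2, hJJ]
  abel

end ContinuousLinearMap

/-- The fundamental kernel identity for the resolvent-type function
`Θ(z) = I + (z - μ) C (I - zT)⁻¹ P⁻¹ (μI - T*)⁻¹ C* J` built from a strictly positive
solution `P` of the Stein equation `P - T* P T = C* J C`. -/
theorem theta_kernel_identity
    {X K₀ : Type*}
    [NormedAddCommGroup X] [InnerProductSpace ℂ X] [FiniteDimensional ℂ X]
    [NormedAddCommGroup K₀] [InnerProductSpace ℂ K₀] [CompleteSpace K₀]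
    (J : K₀ →L[ℂ] K₀) (hJsa : IsSelfAdjoint J) (hJ2 : J ∘L J = 1)
    (C : X →L[ℂ] K₀) (T : X →L[ℂ] X) (P : X →L[ℂ] X)
    (hPsa : IsSelfAdjoint P)
    (hPpos : ∃ c : ℝ, 0 < c ∧ ∀ x : X, c * ‖x‖ ^ 2 ≤ (inner ℂ (P x) x : ℂ).re)
    (hStein : P - ContinuousLinearMap.adjoint T ∘L P ∘L T
        = ContinuousLinearMap.adjoint C ∘L J ∘L C)
    (μ : ℂ) (hμ : ‖μ‖ = 1)
    (hμT : IsUnit (μ • (1 : X →L[ℂ] X) - ContinuousLinearMap.adjoint T))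
    (hres : ∀ z : ℂ, ‖z‖ < 1 → IsUnit ((1 : X →L[ℂ] X) - z • T))
    (Θ : ℂ → (K₀ →L[ℂ] K₀))
    (hΘ : ∀ z : ℂ, Θ z = 1 + (z - μ) •
      (C ∘L Ring.inverse ((1 : X →L[ℂ] X) - z • T) ∘L Ring.inverse P
         ∘L Ring.inverse (μ • (1 : X →L[ℂ] X) - ContinuousLinearMap.adjoint T)
         ∘L ContinuousLinearMap.adjoint C ∘L J)) :
    ∀ z ζ : ℂ, ‖z‖ < 1 → ‖ζ‖ < 1 →
      J - Θ z ∘L J ∘L ContinuousLinearMap.adjoint (Θ ζ) =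
        (1 - z * (starRingEnd ℂ) ζ) •
          (C ∘L Ring.inverse ((1 : X →L[ℂ] X) - z • T) ∘L Ring.inverse P
            ∘L Ring.inverse ((1 : X →L[ℂ] X) - ((starRingEnd ℂ) ζ) • ContinuousLinearMap.adjoint T)
            ∘L ContinuousLinearMap.adjoint C) := by
  intro z ζ hz hζ
  obtain ⟨c, hc, hPc⟩ := hPpos
  have hP : IsUnit P := isUnit_of_coercive hc hPc
  have hμμ : μ * conj μ = 1 := by
    rw [Complex.mul_conj, ← Complex.sq_norm, hμ, one_pow, Complex.ofReal_one]
  have hζT : IsUnit (1 - conj ζ • T†) := by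
    simpa only [star_eq_adjoint, map_sub, map_smulₛₗ, adjoint_one] using (hres ζ hζ).star
  have hμT' : IsUnit (conj μ • 1 - T) := by
    simpa only [star_eq_adjoint, map_sub, map_smulₛₗ, adjoint_one, adjoint_adjoint] using hμT.star
  have hΘ' (w : ℂ) : Θ w = 1 + C ∘L ((w - μ) • ((1 - w • T)⁻¹ʳ * P⁻¹ʳ * (μ • 1 - T†)⁻¹ʳ))
      ∘L C† ∘L J := by
    simp only [hΘ, smul_comp, comp_smul, mul_def, comp_assoc]
  have key := stein_resolvent_identity hμμ (hres z hz) hζT hμT hμT' hP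
  have hFζ : ((ζ - μ) • ((1 - ζ • T)⁻¹ʳ * P⁻¹ʳ * (μ • 1 - T†)⁻¹ʳ))†
      = (conj ζ - conj μ)
        • ((conj μ • 1 - T)⁻¹ʳ * P⁻¹ʳ * (1 - conj ζ • T†)⁻¹ʳ) := by
    rw [← star_eq_adjoint]
    simp only [star_smul, star_mul, star_eq_adjoint, adjoint_ringInverse, map_sub, map_smulₛₗ,
      adjoint_one, adjoint_adjoint, hPsa.adjoint_eq, Complex.star_def, mul_assoc]
  rw [hΘ', hΘ', sub_comp_one_add_comp_adjoint hJsa hJ2, ← hStein, hFζ]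
  simp only [← mul_def, mul_assoc, smul_mul_assoc, mul_smul_comm, smul_smul] at key ⊢
  rw [key]
  simp only [neg_smul, comp_neg, neg_comp, neg_neg, comp_smul, smul_comp, mul_def, comp_assoc]
end

section
/- Let H be a reproducing kernel Hilbert space of Y-valued functions on a set Ω with L(Y)-valued reproducing kernel K, and let F : Ω → Y be a function, γ > 0. Then F belongs to H with ‖F‖_H ≤ γ if and only if the kernel (ω, ζ) ↦ K(ω, ζ) − γ^{-2} F(ω) ⊗ F(ζ)* is a positive kernel on Ω × Ω, i.e., Σ_{i,j} ⟨(K(ω_i, ω_j) − γ^{-2} F(ω_i)⟨·, F(ω_j)⟩) y_j, y_i⟩ ≥ 0 for all finite tuples of points ω_i ∈ Ω and vectors y_i ∈ Y. -/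
open scoped InnerProductSpace ComplexConjugate

/-! With `s = ∑ i, kfun (ω i) (y i)`, the quadratic form of the kernel at `(ω i, y i)` equals
`‖s‖² - γ⁻² ‖∑ i, ⟪y i, F (ω i)⟫‖²`. If `F = Jmap f`, that sum is `⟪s, f⟫` and Cauchy–Schwarz
gives positivity. Conversely, positivity says exactly that `kfun ζ y ↦ ⟪F ζ, y⟫` is a
well-defined functional of norm at most `γ` on the span of the kernel sections; Hahn–Banach
and Riesz represent it by some `f` with `‖f‖ ≤ γ`, and the reproducing property turns
`⟪f, kfun ζ y⟫ = ⟪F ζ, y⟫` into `Jmap f = F`. -/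

theorem LinearMap.exists_comp_rangeRestrict_eq {R E F G : Type*} [Ring R] [AddCommGroup E]
    [Module R E] [AddCommGroup F] [Module R F] [AddCommGroup G] [Module R G]
    (T : E →ₗ[R] F) (M : E →ₗ[R] G) (h : LinearMap.ker T ≤ LinearMap.ker M) :
    ∃ L : LinearMap.range T →ₗ[R] G, L ∘ₗ T.rangeRestrict = M :=
  ⟨(LinearMap.ker T).liftQ M h ∘ₗ T.quotKerEquivRange.symm, by
    ext x
    have : T.quotKerEquivRange.symm (T.rangeRestrict x) = Submodule.Quotient.mk x :=
      T.quotKerEquivRange.symm_apply_eq.mpr rfl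
    simp [this]⟩

section Dual

variable {𝕜 E F : Type*} [RCLike 𝕜] [AddCommGroup E] [Module 𝕜 E]

theorem exists_strongDual_comp_eq_of_norm_le [NormedAddCommGroup F] [NormedSpace 𝕜 F]
    (T : E →ₗ[𝕜] F) (M : E →ₗ[𝕜] 𝕜) {γ : ℝ} (hγ : 0 ≤ γ) (h : ∀ x, ‖M x‖ ≤ γ * ‖T x‖) :
    ∃ L : StrongDual 𝕜 F, ‖L‖ ≤ γ ∧ ∀ x, L (T x) = M x := by
  have hker : LinearMap.ker T ≤ LinearMap.ker M := fun x hx => by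
    simpa [LinearMap.mem_ker.mp hx] using h x
  obtain ⟨L₀, hL₀⟩ := T.exists_comp_rangeRestrict_eq M hker
  have hbound : ∀ v, ‖L₀ v‖ ≤ γ * ‖v‖ := by
    intro v
    obtain ⟨x, rfl⟩ := T.surjective_rangeRestrict v
    simpa [← LinearMap.comp_apply, hL₀] using h x
  obtain ⟨L, hLext, hLnorm⟩ := exists_extension_norm_eq _ (L₀.mkContinuous γ hbound)
  refine ⟨L, hLnorm ▸ LinearMap.mkContinuous_norm_le _ hγ _, fun x => ?_⟩
  simpa [← LinearMap.comp_apply, hL₀] using hLext (T.rangeRestrict x)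

theorem exists_inner_comp_eq_of_norm_le [NormedAddCommGroup F] [InnerProductSpace 𝕜 F]
    [CompleteSpace F]
    (T : E →ₗ[𝕜] F) (M : E →ₗ[𝕜] 𝕜) {γ : ℝ} (hγ : 0 ≤ γ) (h : ∀ x, ‖M x‖ ≤ γ * ‖T x‖) :
    ∃ f : F, ‖f‖ ≤ γ ∧ ∀ x, ⟪f, T x⟫_𝕜 = M x := by
  obtain ⟨L, hL, hLT⟩ := exists_strongDual_comp_eq_of_norm_le T M hγ h
  exact ⟨(InnerProductSpace.toDual 𝕜 F).symm L, by simpa using hL, fun x => by simp [hLT]⟩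

end Dual

theorem sq_sub_inv_sq_mul_sq_nonneg_iff {a b γ : ℝ} (ha : 0 ≤ a) (hb : 0 ≤ b) (hγ : 0 < γ) :
    0 ≤ a ^ 2 - (γ ^ 2)⁻¹ * b ^ 2 ↔ b ≤ γ * a := by
  rw [sub_nonneg, inv_mul_le_iff₀ (by positivity), ← mul_pow,
    pow_le_pow_iff_left₀ hb (mul_nonneg hγ.le ha) two_ne_zero]

theorem Finsupp.sum_eq_sum_equivFin {α M N : Type*} [Zero M] [AddCommMonoid N]
    (l : α →₀ M) (g : α → M → N) :
    l.sum g = ∑ k, g (l.support.equivFin.symm k) (l (l.support.equivFin.symm k)) := by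
  rw [Finsupp.sum, ← Finset.sum_coe_sort, ← Equiv.sum_comp l.support.equivFin.symm]

namespace RKHS

variable {Ω Y H : Type*} [NormedAddCommGroup Y] [InnerProductSpace ℂ Y]
  [NormedAddCommGroup H] [InnerProductSpace ℂ H]
  {Jmap : H →ₗ[ℂ] (Ω → Y)} {K : Ω → Ω → (Y →L[ℂ] Y)} {kfun : Ω → Y → H}

theorem kfun_smul (hrepr : ∀ (f : H) (ζ : Ω) (y : Y), ⟪kfun ζ y, f⟫_ℂ = ⟪y, Jmap f ζ⟫_ℂ)
    (ζ : Ω) (a : ℂ) (y : Y) : kfun ζ (a • y) = a • kfun ζ y :=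
  ext_inner_right ℂ fun f => by rw [hrepr, inner_smul_left, inner_smul_left, hrepr]

theorem re_sum_sum_kernel_sub_eq
    (hkk : ∀ (ω ζ : Ω) (y y' : Y), ⟪kfun ω y, kfun ζ y'⟫_ℂ = ⟪y, K ω ζ y'⟫_ℂ)
    (F : Ω → Y) (γ : ℝ) {ι : Type*} [Fintype ι] (ω : ι → Ω) (y : ι → Y) :
    (∑ i, ∑ j, (⟪y i, K (ω i) (ω j) (y j)⟫_ℂ
        - ((γ : ℂ) ^ 2)⁻¹ * (⟪F (ω j), y j⟫_ℂ * ⟪y i, F (ω i)⟫_ℂ))).re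
      = ‖∑ i, kfun (ω i) (y i)‖ ^ 2 - (γ ^ 2)⁻¹ * ‖∑ i, ⟪y i, F (ω i)⟫_ℂ‖ ^ 2 := by
  set c := ∑ i, ⟪y i, F (ω i)⟫_ℂ
  have hgram : ∑ i, ∑ j, ⟪y i, K (ω i) (ω j) (y j)⟫_ℂ
      = ⟪∑ i, kfun (ω i) (y i), ∑ i, kfun (ω i) (y i)⟫_ℂ := by
    simp only [sum_inner, inner_sum, hkk]
    exact Finset.sum_comm
  have hrank_one : ∑ i, ∑ j, ⟪F (ω j), y j⟫_ℂ * ⟪y i, F (ω i)⟫_ℂ = conj c * c := by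
    rw [map_sum, Finset.sum_mul_sum, Finset.sum_comm]
    simp only [inner_conj_symm]
  have hnorm : (⟪∑ i, kfun (ω i) (y i), ∑ i, kfun (ω i) (y i)⟫_ℂ).re
      = ‖∑ i, kfun (ω i) (y i)‖ ^ 2 :=
    inner_self_eq_norm_sq (𝕜 := ℂ) _
  simp only [Finset.sum_sub_distrib, ← Finset.mul_sum]
  rw [hgram, hrank_one, Complex.conj_mul',
    ← Complex.ofReal_pow, ← Complex.ofReal_pow, ← Complex.ofReal_inv, ← Complex.ofReal_mul,
    Complex.sub_re, Complex.ofReal_re, hnorm]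

theorem norm_linearCombination_le_of_kernel_nonneg
    (hrepr : ∀ (f : H) (ζ : Ω) (y : Y), ⟪kfun ζ y, f⟫_ℂ = ⟪y, Jmap f ζ⟫_ℂ)
    (hkk : ∀ (ω ζ : Ω) (y y' : Y), ⟪kfun ω y, kfun ζ y'⟫_ℂ = ⟪y, K ω ζ y'⟫_ℂ)
    (F : Ω → Y) {γ : ℝ} (hγ : 0 < γ)
    (hpos : ∀ (n : ℕ) (ω : Fin n → Ω) (y : Fin n → Y),
      0 ≤ (∑ i : Fin n, ∑ j : Fin n, (⟪y i, K (ω i) (ω j) (y j)⟫_ℂ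
        - ((γ : ℂ) ^ 2)⁻¹ * (⟪F (ω j), y j⟫_ℂ * ⟪y i, F (ω i)⟫_ℂ))).re)
    (l : Ω × Y →₀ ℂ) :
    ‖Finsupp.linearCombination ℂ (fun p : Ω × Y => ⟪F p.1, p.2⟫_ℂ) l‖
      ≤ γ * ‖Finsupp.linearCombination ℂ (fun p : Ω × Y => kfun p.1 p.2) l‖ := by
  set e := l.support.equivFin.symm
  have hp := hpos _ (fun k => (e k : Ω × Y).1) (fun k => l (e k) • (e k : Ω × Y).2)
  have hT : ∑ k, kfun (e k : Ω × Y).1 (l (e k) • (e k : Ω × Y).2)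
      = Finsupp.linearCombination ℂ (fun p : Ω × Y => kfun p.1 p.2) l := by
    simp only [kfun_smul hrepr, Finsupp.linearCombination_apply, Finsupp.sum_eq_sum_equivFin, e]
  have hM : ∑ k, ⟪l (e k) • (e k : Ω × Y).2, F (e k : Ω × Y).1⟫_ℂ
      = conj (Finsupp.linearCombination ℂ (fun p : Ω × Y => ⟪F p.1, p.2⟫_ℂ) l) := by
    simp only [Finsupp.linearCombination_apply, Finsupp.sum_eq_sum_equivFin, map_sum,
      inner_smul_left, smul_eq_mul, map_mul, inner_conj_symm, e]
  rw [re_sum_sum_kernel_sub_eq hkk, hT, hM, RCLike.norm_conj,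
    sq_sub_inv_sq_mul_sq_nonneg_iff (norm_nonneg _) (norm_nonneg _) hγ] at hp
  exact hp

end RKHS

theorem mem_RKHS_norm_le_iff_kernel_positive_general
    {Ω : Type*} {Y H : Type*}
    [NormedAddCommGroup Y] [InnerProductSpace ℂ Y]
    [NormedAddCommGroup H] [InnerProductSpace ℂ H] [CompleteSpace H]
    (Jmap : H →ₗ[ℂ] (Ω → Y))
    (K : Ω → Ω → (Y →L[ℂ] Y)) (kfun : Ω → Y → H)
    (hker : ∀ (ζ : Ω) (y : Y), Jmap (kfun ζ y) = fun ω => K ω ζ y)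
    (hrepr : ∀ (f : H) (ζ : Ω) (y : Y), ⟪kfun ζ y, f⟫_ℂ = ⟪y, Jmap f ζ⟫_ℂ)
    (F : Ω → Y) (γ : ℝ) (hγ : 0 < γ) :
    (∃ f : H, Jmap f = F ∧ ‖f‖ ≤ γ) ↔
      ∀ (n : ℕ) (ω : Fin n → Ω) (y : Fin n → Y),
        0 ≤ (∑ i : Fin n, ∑ j : Fin n,
          (⟪y i, K (ω i) (ω j) (y j)⟫_ℂ
            - ((γ : ℂ) ^ 2)⁻¹ * (⟪F (ω j), y j⟫_ℂ * ⟪y i, F (ω i)⟫_ℂ))).re := by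
  have hkk : ∀ (ω ζ : Ω) (y y' : Y), ⟪kfun ω y, kfun ζ y'⟫_ℂ = ⟪y, K ω ζ y'⟫_ℂ := by
    intro ω ζ y y'
    rw [hrepr, hker]
  constructor
  · rintro ⟨f, rfl, hf⟩ n ω y
    rw [RKHS.re_sum_sum_kernel_sub_eq hkk,
      sq_sub_inv_sq_mul_sq_nonneg_iff (norm_nonneg _) (norm_nonneg _) hγ]
    set s := ∑ i, kfun (ω i) (y i)
    have hsf : ∑ i, ⟪y i, Jmap f (ω i)⟫_ℂ = ⟪s, f⟫_ℂ := by
      simp only [s, sum_inner, hrepr]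
    calc ‖∑ i, ⟪y i, Jmap f (ω i)⟫_ℂ‖ = ‖⟪s, f⟫_ℂ‖ := by rw [hsf]
      _ ≤ ‖s‖ * ‖f‖ := norm_inner_le_norm s f
      _ ≤ γ * ‖s‖ := by rw [mul_comm]; exact mul_le_mul_of_nonneg_right hf (norm_nonneg s)
  · intro hpos
    obtain ⟨f, hf, hfT⟩ := exists_inner_comp_eq_of_norm_le _ _ hγ.le
      (RKHS.norm_linearCombination_le_of_kernel_nonneg hrepr hkk F hγ hpos)
    refine ⟨f, funext fun ζ => ext_inner_left ℂ fun v => ?_, hf⟩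
    have hfk := hfT (Finsupp.single (ζ, v) 1)
    simp only [Finsupp.linearCombination_single, one_smul] at hfk
    rw [← hrepr, ← inner_conj_symm, hfk, inner_conj_symm]

/-- Norm-constrained membership in a vector-valued RKHS: `F` belongs to the RKHS `H`
(realized by the linear point-evaluation map `Jmap : H →ₗ (Ω → Y)` with kernel elements
`kfun ζ y` having the reproducing property) with norm at most `γ` if and only if the
kernel `K(ω,ζ) - γ⁻² F(ω) F(ζ)*` is a positive kernel on `Ω × Ω`. -/
theorem mem_RKHS_norm_le_iff_kernel_positive
    {Ω : Type*} {Y H : Type*}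
    [NormedAddCommGroup Y] [InnerProductSpace ℂ Y] [CompleteSpace Y]
    [NormedAddCommGroup H] [InnerProductSpace ℂ H] [CompleteSpace H]
    (Jmap : H →ₗ[ℂ] (Ω → Y))
    (K : Ω → Ω → (Y →L[ℂ] Y)) (kfun : Ω → Y → H)
    (hker : ∀ (ζ : Ω) (y : Y), Jmap (kfun ζ y) = fun ω => K ω ζ y)
    (hrepr : ∀ (f : H) (ζ : Ω) (y : Y), ⟪kfun ζ y, f⟫_ℂ = ⟪y, Jmap f ζ⟫_ℂ)
    (hdense : Dense ((Submodule.span ℂ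
        (Set.range fun p : Ω × Y => kfun p.1 p.2) : Submodule ℂ H) : Set H))
    (F : Ω → Y) (γ : ℝ) (hγ : 0 < γ) :
    (∃ f : H, Jmap f = F ∧ ‖f‖ ≤ γ) ↔
      ∀ (n : ℕ) (ω : Fin n → Ω) (y : Fin n → Y),
        0 ≤ (∑ i : Fin n, ∑ j : Fin n,
          (⟪y i, K (ω i) (ω j) (y j)⟫_ℂ
            - ((γ : ℂ) ^ 2)⁻¹ * (⟪F (ω j), y j⟫_ℂ * ⟪y i, F (ω i)⟫_ℂ))).re :=
  mem_RKHS_norm_le_iff_kernel_positive_general Jmap K kfun hker hrepr F γ hγ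
end

section
/- Let S : 𝔻 → ℂ be a holomorphic function on the open unit disk with |S(z)| ≤ 1 for all z. Then the de Branges–Rovnyak kernel K_S(z, ζ) = (1 − S(z) conj(S(ζ)))/(1 − z conj(ζ)) is a positive kernel on 𝔻 × 𝔻: for any finite points z₁,…,z_n ∈ 𝔻 and scalars c₁,…,c_n, Σ_{i,j} K_S(z_i, z_j) c_j conj(c_i) ≥ 0. -/
/-!
On the unit circle `szegoKernel ζ w = w / (w - ζ)`, so Cauchy's formula says that averaging
`g · szegoKernel ζ` over the circle gives `g ζ` whenever `g` is holomorphic on the disc and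
continuous up to the boundary. Put `V = ∑ cⱼ szegoKernel · zⱼ` and
`W = ∑ cⱼ conj (S zⱼ) szegoKernel · zⱼ`. Expanding `|V|² + |W|² - 2 Re (conj V · S W)` into such
products shows that its circle average is `2π` times the quadratic form of the de Branges–Rovnyak
kernel. If `|S| ≤ 1` on the circle, this integrand is at least `(|V| - |W|)² ≥ 0`. A general
Schur function is reduced to this case through its dilations `S (r ·)`, letting `r → 1`.
-/

open scoped ComplexConjugate
open Complex Metric

noncomputable def szegoKernel (z ζ : ℂ) : ℂ := (1 - z * conj ζ)⁻¹

noncomputable def deBrangesRovnyakKernel (S : ℂ → ℂ) (z ζ : ℂ) : ℂ :=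
  (1 - S z * conj (S ζ)) * szegoKernel z ζ

theorem conj_szegoKernel (z ζ : ℂ) : conj (szegoKernel z ζ) = szegoKernel ζ z := by
  simp [szegoKernel, mul_comm]

theorem one_sub_mul_conj_ne_zero {z ζ : ℂ} (h : ‖z‖ * ‖ζ‖ < 1) : 1 - z * conj ζ ≠ 0 := by
  refine sub_ne_zero.2 fun h1 => h.ne' ?_
  rw [← RCLike.norm_conj ζ, ← norm_mul, ← h1, norm_one]

theorem szegoKernel_of_norm_eq_one (ζ : ℂ) {w : ℂ} (hw : ‖w‖ = 1) :
    szegoKernel ζ w = w * (w - ζ)⁻¹ := by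
  have hw0 : w ≠ 0 := norm_ne_zero_iff.1 (hw ▸ one_ne_zero)
  have hconj : conj w = w⁻¹ := by
    rw [inv_def, normSq_eq_norm_sq, hw]; simp
  rw [szegoKernel, hconj, ← mul_inv_cancel₀ hw0, ← sub_mul, mul_inv, inv_inv, mul_comm]

theorem diffContOnCl_szegoKernel_left {ζ : ℂ} (hζ : ζ ∈ ball (0 : ℂ) 1) :
    DiffContOnCl ℂ (fun u => szegoKernel u ζ) (ball 0 1) := by
  refine DifferentiableOn.diffContOnCl_ball (U := closedBall 0 1) ?_ le_rfl
  refine ((differentiableOn_const _).sub (differentiableOn_id.mul_const _)).inv fun u hu => ?_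
  refine one_sub_mul_conj_ne_zero (mul_lt_one_of_nonneg_of_lt_one_right ?_ (norm_nonneg _) ?_)
  · simpa using hu
  · simpa using hζ

theorem continuous_circleMap_mul_szegoKernel {g : ℂ → ℂ} (hg : ContinuousOn g (closedBall 0 1))
    {ζ : ℂ} (hζ : ζ ∈ ball (0 : ℂ) 1) :
    Continuous fun θ => g (circleMap 0 1 θ) * szegoKernel ζ (circleMap 0 1 θ) := by
  have hζ' : ‖ζ‖ < 1 := mem_ball_zero_iff.1 hζ
  refine (hg.comp_continuous (continuous_circleMap 0 1) fun θ => by simp).mul ?_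
  refine (continuous_const.sub (continuous_const.mul
    (continuous_conj.comp (continuous_circleMap 0 1)))).inv₀ fun θ => ?_
  exact one_sub_mul_conj_ne_zero (by simpa using hζ')

theorem integral_circleMap_mul_szegoKernel {g : ℂ → ℂ} (hg : DiffContOnCl ℂ g (ball 0 1))
    {ζ : ℂ} (hζ : ζ ∈ ball (0 : ℂ) 1) :
    ∫ θ in (0)..(2 * Real.pi), g (circleMap 0 1 θ) * szegoKernel ζ (circleMap 0 1 θ)
      = 2 * Real.pi * g ζ := by
  have hcauchy := hg.circleIntegral_sub_inv_smul hζ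
  have hintegrand : ∀ θ : ℝ,
      deriv (circleMap 0 1) θ • (circleMap 0 1 θ - ζ)⁻¹ • g (circleMap 0 1 θ)
        = I * (g (circleMap 0 1 θ) * szegoKernel ζ (circleMap 0 1 θ)) := fun θ => by
    rw [szegoKernel_of_norm_eq_one ζ (by simp), deriv_circleMap, smul_eq_mul, smul_eq_mul]
    ring
  rw [circleIntegral] at hcauchy
  simp_rw [hintegrand, intervalIntegral.integral_const_mul, smul_eq_mul] at hcauchy
  apply mul_left_cancel₀ I_ne_zero
  rw [hcauchy]
  ring

theorem integral_circleMap_sum_mul_szegoKernel {ι : Type*} (s : Finset ι) {g : ι → ℂ → ℂ}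
    {ζ : ι → ℂ} (hg : ∀ i ∈ s, DiffContOnCl ℂ (g i) (ball 0 1))
    (hζ : ∀ i ∈ s, ζ i ∈ ball (0 : ℂ) 1) :
    ∫ θ in (0)..(2 * Real.pi), ∑ i ∈ s, g i (circleMap 0 1 θ) * szegoKernel (ζ i) (circleMap 0 1 θ)
      = 2 * Real.pi * ∑ i ∈ s, g i (ζ i) := by
  rw [intervalIntegral.integral_finsetSum, Finset.mul_sum]
  · exact Finset.sum_congr rfl fun i hi => integral_circleMap_mul_szegoKernel (hg i hi) (hζ i hi)
  · exact fun i hi => (continuous_circleMap_mul_szegoKernel (hg i hi).continuousOn_ball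
      (hζ i hi)).intervalIntegrable _ _

theorem two_mul_re_conj_mul_mul_le {s v w : ℂ} (hs : ‖s‖ ≤ 1) :
    2 * (conj v * (s * w)).re ≤ ‖v‖ ^ 2 + ‖w‖ ^ 2 := by
  have hre : (conj v * (s * w)).re ≤ ‖v‖ * ‖w‖ := calc
    _ ≤ ‖conj v * (s * w)‖ := re_le_norm _
    _ = ‖s‖ * (‖v‖ * ‖w‖) := by rw [norm_mul, norm_mul, RCLike.norm_conj]; ring
    _ ≤ ‖v‖ * ‖w‖ := mul_le_of_le_one_left (by positivity) hs
  nlinarith [two_mul_le_add_sq ‖v‖ ‖w‖]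

theorem re_nonneg_of_integral_eq_two_pi_mul {F : ℝ → ℂ}
    (hF : IntervalIntegrable F MeasureTheory.volume 0 (2 * Real.pi)) (hre : ∀ θ, 0 ≤ (F θ).re)
    {x : ℂ} (hx : ∫ θ in (0)..(2 * Real.pi), F θ = 2 * Real.pi * x) : 0 ≤ x.re := by
  refine (mul_nonneg_iff_of_pos_left Real.two_pi_pos).1 ?_
  calc 0 ≤ ∫ θ in (0)..(2 * Real.pi), (F θ).re :=
        intervalIntegral.integral_nonneg Real.two_pi_pos.le fun θ _ => hre θ
    _ = (∫ θ in (0)..(2 * Real.pi), F θ).re := intervalIntegral.intervalIntegral_re hF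
    _ = 2 * Real.pi * x.re := by rw [hx]; simp

theorem re_sum_deBrangesRovnyakKernel_nonneg_of_diffContOnCl {ι : Type*} [Fintype ι]
    {S : ℂ → ℂ} (hS : DiffContOnCl ℂ S (ball 0 1)) (hSb : ∀ w ∈ sphere (0 : ℂ) 1, ‖S w‖ ≤ 1)
    {z : ι → ℂ} (hz : ∀ i, z i ∈ ball (0 : ℂ) 1) (c : ι → ℂ) :
    0 ≤ (∑ i, ∑ j, deBrangesRovnyakKernel S (z i) (z j) * c j * conj (c i)).re := by
  set w := circleMap 0 1
  set V : ℝ → ℂ := fun θ => ∑ j, c j * szegoKernel (w θ) (z j)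
  set W : ℝ → ℂ := fun θ => ∑ j, c j * conj (S (z j)) * szegoKernel (w θ) (z j)
  set g : ι × ι → ℂ → ℂ := fun p u => conj (c p.1) * c p.2 *
    (1 + S (z p.1) * conj (S (z p.2)) - 2 * S u * conj (S (z p.2))) * szegoKernel u (z p.2)
  have hg : ∀ p, DiffContOnCl ℂ (g p) (ball 0 1) := fun p => by
    obtain ⟨hSd, hSc⟩ := hS
    obtain ⟨hkd, hkc⟩ := diffContOnCl_szegoKernel_left (hz p.2)
    constructor <;> fun_prop
  have hexpand : ∀ θ, ∑ p, g p (w θ) * szegoKernel (z p.1) (w θ)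
      = conj (V θ) * V θ + conj (W θ) * W θ - 2 * (conj (V θ) * (S (w θ) * W θ)) := by
    intro θ
    rw [mul_left_comm (conj (V θ))]
    simp only [V, W, g, map_sum, map_mul, conj_szegoKernel, Complex.conj_conj,
      Fintype.sum_prod_type]
    rw [Finset.sum_mul_sum, Finset.sum_mul_sum, Finset.sum_mul_sum]
    simp only [Finset.mul_sum, ← Finset.sum_add_distrib, ← Finset.sum_sub_distrib]
    refine Finset.sum_congr rfl fun i _ => Finset.sum_congr rfl fun j _ => ?_
    ring
  have hintegral : ∫ θ in (0)..(2 * Real.pi), ∑ p, g p (w θ) * szegoKernel (z p.1) (w θ)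
      = 2 * Real.pi * ∑ i, ∑ j, deBrangesRovnyakKernel S (z i) (z j) * c j * conj (c i) := by
    rw [integral_circleMap_sum_mul_szegoKernel _ (fun p _ => hg p) (fun p _ => hz p.1),
      Fintype.sum_prod_type]
    congr 1
    refine Finset.sum_congr rfl fun i _ => Finset.sum_congr rfl fun j _ => ?_
    simp only [g, deBrangesRovnyakKernel]
    ring
  have hnonneg : ∀ θ, 0 ≤ (∑ p, g p (w θ) * szegoKernel (z p.1) (w θ)).re := by
    intro θ
    have hre := two_mul_re_conj_mul_mul_le (v := V θ) (w := W θ) (hSb (w θ) (by simp [w]))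
    have htwo : (2 * (conj (V θ) * (S (w θ) * W θ))).re
        = 2 * (conj (V θ) * (S (w θ) * W θ)).re := by simp
    rw [hexpand θ, conj_mul', conj_mul', sub_re, add_re, htwo]
    norm_cast
    linarith
  have hcont : Continuous fun θ => ∑ p, g p (w θ) * szegoKernel (z p.1) (w θ) :=
    continuous_finsetSum _ fun p _ =>
      continuous_circleMap_mul_szegoKernel (hg p).continuousOn_ball (hz p.1)
  exact re_nonneg_of_integral_eq_two_pi_mul (hcont.intervalIntegrable _ _) hnonneg hintegral

theorem DifferentiableOn.diffContOnCl_comp_const_mul {f : ℂ → ℂ}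
    (hf : DifferentiableOn ℂ f (ball 0 1)) {r : ℂ} (hr : ‖r‖ < 1) :
    DiffContOnCl ℂ (fun u => f (r * u)) (ball 0 1) := by
  refine DifferentiableOn.diffContOnCl_ball (U := closedBall 0 1) ?_ le_rfl
  refine hf.comp (differentiableOn_id.const_mul r) fun u hu => ?_
  rw [mem_closedBall_zero_iff] at hu
  rw [mem_ball_zero_iff, norm_mul]
  exact mul_lt_one_of_nonneg_of_lt_one_left (norm_nonneg _) hr hu

theorem re_sum_deBrangesRovnyakKernel_comp_const_mul_nonneg {ι : Type*} [Fintype ι]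
    {S : ℂ → ℂ} (hS : DifferentiableOn ℂ S (ball 0 1)) (hSb : ∀ w ∈ ball (0 : ℂ) 1, ‖S w‖ ≤ 1)
    {r : ℂ} (hr : ‖r‖ < 1) {z : ι → ℂ} (hz : ∀ i, z i ∈ ball (0 : ℂ) 1) (c : ι → ℂ) :
    0 ≤ (∑ i, ∑ j,
      deBrangesRovnyakKernel (fun u => S (r * u)) (z i) (z j) * c j * conj (c i)).re := by
  refine re_sum_deBrangesRovnyakKernel_nonneg_of_diffContOnCl
    (hS.diffContOnCl_comp_const_mul hr) (fun u hu => hSb _ ?_) hz c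
  rw [mem_sphere_zero_iff_norm] at hu
  rwa [mem_ball_zero_iff, norm_mul, hu, mul_one]

/-- The de Branges–Rovnyak kernel `K_S(z,ζ) = (1 - S(z) conj(S(ζ)))/(1 - z conj(ζ))` of a
scalar Schur-class function `S` is a positive kernel on the unit disk. -/
theorem deBrangesRovnyak_kernel_positive
    (S : ℂ → ℂ)
    (hS : DifferentiableOn ℂ S (Metric.ball (0 : ℂ) 1))
    (hSb : ∀ z ∈ Metric.ball (0 : ℂ) 1, ‖S z‖ ≤ 1) :
    ∀ (n : ℕ) (z : Fin n → ℂ), (∀ i, z i ∈ Metric.ball (0 : ℂ) 1) →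
      ∀ c : Fin n → ℂ,
        0 ≤ (∑ i : Fin n, ∑ j : Fin n,
          (1 - S (z i) * conj (S (z j))) / (1 - z i * conj (z j)) * c j * conj (c i)).re := by
  intro n z hz c
  set Q : ℝ → ℝ := fun r =>
    (∑ i, ∑ j, deBrangesRovnyakKernel (fun u => S (r * u)) (z i) (z j) * c j * conj (c i)).re
  have hQ : ∀ r ∈ Set.Ioo (0 : ℝ) 1, 0 ≤ Q r := fun r hr =>
    re_sum_deBrangesRovnyakKernel_comp_const_mul_nonneg hS hSb
      (by simpa [abs_of_pos hr.1] using hr.2) hz c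
  have hSz : ∀ i, ContinuousAt (fun r : ℝ => S (r * z i)) 1 := fun i =>
    (hS.continuousOn.continuousAt (isOpen_ball.mem_nhds (hz i))).comp_of_eq
      (by fun_prop) (by simp)
  have hQc : ContinuousAt Q 1 :=
    (Complex.continuous_re.tendsto _).comp <| tendsto_finsetSum _ fun i _ =>
      tendsto_finsetSum _ fun j _ =>
        (((continuousAt_const.sub ((hSz i).mul (continuous_conj.continuousAt.comp (hSz j)))).mul
          continuousAt_const).mul continuousAt_const).mul continuousAt_const
  have hQ1 : 0 ≤ Q 1 := ge_of_tendsto (hQc.tendsto.mono_left nhdsWithin_le_nhds)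
    (Filter.mem_of_superset (Ioo_mem_nhdsLT zero_lt_one) hQ)
  simpa [Q, deBrangesRovnyakKernel, szegoKernel, div_eq_mul_inv] using hQ1
end

section
/- Let K be a Kreĭn space given by a Hilbert space H with fundamental symmetry W (a bounded, boundedly invertible self-adjoint operator defining the indefinite inner product [x, y] = ⟨W x, y⟩). Let G ⊆ K be a closed subspace that is uniformly positive, i.e., [g, g] ≥ c ‖g‖² for all g ∈ G with some c > 0. Then K decomposes as the [·,·]-orthogonal direct sum G ⊕ G^{[⊥]}, where G^{[⊥]} = { k : [k, g] = 0 for all g ∈ G }. -/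
/-!
The compression `P_G W|_G` of `W` to the Hilbert space `G` satisfies
`c ‖u‖² ≤ re ⟪P_G W u, u⟫`, so it is bounded below, has closed range, and its range has
trivial orthogonal complement: it is bijective (Lax–Milgram). The `G`-component of `x` is
then the unique `g ∈ G` with `P_G W g = P_G W x`, i.e. with `W (x - g) ⊥ G`.
-/

open scoped InnerProductSpace
open RCLike

namespace ContinuousLinearMap

variable {𝕜 E : Type*} [RCLike 𝕜] [NormedAddCommGroup E] [InnerProductSpace 𝕜 E]
  {T : E →L[𝕜] E} {c : ℝ}

theorem eq_zero_of_coercive_of_inner_self_eq_zero (hc : 0 < c)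
    (hT : ∀ u, c * ‖u‖ ^ 2 ≤ re ⟪T u, u⟫_𝕜) {u : E} (hu : ⟪T u, u⟫_𝕜 = 0) : u = 0 := by
  have h := hT u
  rw [hu, map_zero] at h
  have : ‖u‖ ^ 2 ≤ 0 := nonpos_of_mul_nonpos_right h hc
  simpa using this

theorem mul_norm_le_norm_apply_of_coercive (hT : ∀ u, c * ‖u‖ ^ 2 ≤ re ⟪T u, u⟫_𝕜) (u : E) :
    c * ‖u‖ ≤ ‖T u‖ := by
  rcases (norm_nonneg u).eq_or_lt with h | h
  · rw [← h, mul_zero]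
    positivity
  · refine le_of_mul_le_mul_right ?_ h
    calc c * ‖u‖ * ‖u‖ = c * ‖u‖ ^ 2 := by ring
      _ ≤ re ⟪T u, u⟫_𝕜 := hT u
      _ ≤ ‖T u‖ * ‖u‖ := re_inner_le_norm _ _

theorem antilipschitzWith_of_coercive (hc : 0 < c) (hT : ∀ u, c * ‖u‖ ^ 2 ≤ re ⟪T u, u⟫_𝕜) :
    AntilipschitzWith (Real.toNNReal c⁻¹) T :=
  T.antilipschitz_of_bound fun u => by
    rw [Real.coe_toNNReal _ (inv_pos.2 hc).le, inv_mul_eq_div, le_div_iff₀' hc]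
    exact mul_norm_le_norm_apply_of_coercive hT u

theorem bijective_of_coercive [CompleteSpace E] (hc : 0 < c)
    (hT : ∀ u, c * ‖u‖ ^ 2 ≤ re ⟪T u, u⟫_𝕜) : Function.Bijective T := by
  have hanti := antilipschitzWith_of_coercive hc hT
  refine ⟨hanti.injective, ?_⟩
  have : CompleteSpace T.range := (hanti.isComplete_range T.uniformContinuous).completeSpace_coe
  have hperp : T.rangeᗮ = ⊥ := (Submodule.eq_bot_iff _).2 fun w hw =>
    eq_zero_of_coercive_of_inner_self_eq_zero hc hT (hw _ (LinearMap.mem_range_self _ w))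
  exact LinearMap.range_eq_top.1 (Submodule.orthogonal_eq_bot_iff.1 hperp)

end ContinuousLinearMap

namespace Submodule

variable {𝕜 E : Type*} [RCLike 𝕜] [NormedAddCommGroup E] [InnerProductSpace 𝕜 E]
  (G : Submodule 𝕜 E)

noncomputable def compression [G.HasOrthogonalProjection] (W : E →L[𝕜] E) : G →L[𝕜] G :=
  G.orthogonalProjectionOnto ∘L W ∘L G.subtypeL

@[simp]
theorem inner_compression_apply [G.HasOrthogonalProjection] (W : E →L[𝕜] E) (u v : G) :
    ⟪(G.compression W u : E), (v : E)⟫_𝕜 = ⟪W u, (v : E)⟫_𝕜 :=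
  inner_orthogonalProjectionOnto_eq_of_mem_right v (W u)

theorem compression_apply_eq_iff [G.HasOrthogonalProjection] (W : E →L[𝕜] E) (g : G) (x : E) :
    G.compression W g = G.orthogonalProjectionOnto (W x) ↔ ∀ v ∈ G, ⟪W (x - g), v⟫_𝕜 = 0 := by
  simp only [map_sub, inner_sub_left, sub_eq_zero]
  constructor
  · intro h v hv
    rw [← G.inner_compression_apply W g ⟨v, hv⟩, h]
    exact (inner_orthogonalProjectionOnto_eq_of_mem_right ⟨v, hv⟩ (W x)).symm
  · intro h
    exact ext_inner_right 𝕜 fun v => by simpa using (h v v.2).symm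

theorem existsUnique_add_of_coercive [CompleteSpace G] {W : E →L[𝕜] E} {c : ℝ} (hc : 0 < c)
    (hW : ∀ g ∈ G, c * ‖g‖ ^ 2 ≤ re ⟪W g, g⟫_𝕜) (x : E) :
    ∃! p : E × E, p.1 ∈ G ∧ (∀ g ∈ G, ⟪W p.2, g⟫_𝕜 = 0) ∧ x = p.1 + p.2 := by
  have hbij := (G.compression W).bijective_of_coercive hc fun u => by simpa using hW u u.2
  obtain ⟨g, hg⟩ := hbij.2 (G.orthogonalProjectionOnto (W x))
  refine ⟨(g, x - g), ⟨g.2, (G.compression_apply_eq_iff W g x).1 hg, by simp⟩, ?_⟩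
  rintro ⟨g', h'⟩ ⟨hg' : g' ∈ G, horth, rfl⟩
  have hgg' : (⟨g', hg'⟩ : G) = g := hbij.1 <| hg ▸
    (G.compression_apply_eq_iff W ⟨g', hg'⟩ _).2 (by simpa using horth)
  subst hgg'
  simp

end Submodule

theorem krein_uniformly_positive_decomposition_general
    {H : Type*} [NormedAddCommGroup H] [InnerProductSpace ℂ H] [CompleteSpace H]
    (W : H →L[ℂ] H)
    (G : Submodule ℂ H) (hGclosed : IsClosed (G : Set H))
    (hGpos : ∃ c : ℝ, 0 < c ∧ ∀ g ∈ G, c * ‖g‖ ^ 2 ≤ (⟪W g, g⟫_ℂ).re) :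
    ∀ x : H, ∃! p : H × H,
      p.1 ∈ G ∧ (∀ g ∈ G, ⟪W p.2, g⟫_ℂ = 0) ∧ x = p.1 + p.2 := by
  obtain ⟨c, hc, hcoer⟩ := hGpos
  have : CompleteSpace G := hGclosed.completeSpace_coe
  exact G.existsUnique_add_of_coercive hc hcoer

/-- In a Kreĭn space (Hilbert space `H` with fundamental symmetry `W`), a closed uniformly
positive subspace `G` yields the `[·,·]`-orthogonal direct-sum decomposition
`H = G ⊕ G^[⊥]`: every vector decomposes uniquely as `g + h` with `g ∈ G` and `h`
`W`-orthogonal to `G`. -/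
theorem krein_uniformly_positive_decomposition
    {H : Type*} [NormedAddCommGroup H] [InnerProductSpace ℂ H] [CompleteSpace H]
    (W : H →L[ℂ] H) (hWsa : IsSelfAdjoint W) (hWinv : IsUnit W)
    (G : Submodule ℂ H) (hGclosed : IsClosed (G : Set H))
    (hGpos : ∃ c : ℝ, 0 < c ∧ ∀ g ∈ G, c * ‖g‖ ^ 2 ≤ (⟪W g, g⟫_ℂ).re) :
    ∀ x : H, ∃! p : H × H,
      p.1 ∈ G ∧ (∀ g ∈ G, ⟪W p.2, g⟫_ℂ = 0) ∧ x = p.1 + p.2 :=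
  krein_uniformly_positive_decomposition_general W G hGclosed hGpos
end

section
/- Let f be a function holomorphic on a punctured disk-neighborhood region U_{t₀,ε} = { z ∈ 𝔻 : 0 < |z − t₀| < ε } where t₀ is a point of the unit circle, with values in a Banach space. Suppose for some n ≥ 1 and every angle α ∈ (0, π/2) there is γ_α < ∞ with ‖f^{(n)}(z)‖ ≤ γ_α for all z ∈ U_{t₀,ε} satisfying |arg(z − t₀) − arg(−t₀)| < α (nontangential approach region). Then the nontangential limits of f^{(j)}(z) as z → t₀ exist for every j = 0, …, n−1. -/
/-!
In the coordinate `w = (z - t₀) / (-t₀)` a Stolz angle of half-angle `α < π / 2` at `t₀` is the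
convex cone `|Im w| < tan α · Re w`, and near `t₀` (for `|w| < cos α`) it lies inside the disk.
A bound on `g'` in that convex region makes `g` Lipschitz there, so `g` is uniformly continuous
and, `B` being complete, has a limit at `t₀` along the angle; nested angles force all these
limits to agree. A convergent function is bounded near `t₀`, so starting from `f⁽ⁿ⁾` this
descends through `f⁽ⁿ⁻¹⁾, …, f`.
-/

open Complex Filter Set Metric Topology Real

namespace Complex

lemma abs_arg_lt_iff_abs_im_lt {α : ℝ} (hα₀ : 0 < α) (hα : α < π / 2) {w : ℂ} (hw : w ≠ 0) :
    |arg w| < α ↔ |w.im| < Real.tan α * w.re := by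
  rcases le_or_gt w.re 0 with hre | hre
  · have hneg : ¬ |arg w| < α := fun h ↦ by
      have := abs_arg_lt_pi_div_two_iff.mp (h.trans hα)
      simp only [hw, or_false] at this
      linarith
    have htan : 0 < Real.tan α := tan_pos_of_pos_of_lt_pi_div_two hα₀ hα
    simp only [hneg, false_iff, not_lt]
    nlinarith [abs_nonneg w.im]
  · have harg := abs_lt.mp (abs_arg_lt_pi_div_two_iff.mpr (Or.inl hre))
    have hα_mem : α ∈ Ioo (-(π / 2)) (π / 2) := ⟨by linarith, hα⟩
    have hnα_mem : -α ∈ Ioo (-(π / 2)) (π / 2) := ⟨by linarith, by linarith⟩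
    rw [abs_lt, abs_lt, ← strictMonoOn_tan.lt_iff_lt hnα_mem harg,
      ← strictMonoOn_tan.lt_iff_lt harg hα_mem, Real.tan_neg, tan_arg, lt_div_iff₀ hre,
      div_lt_iff₀ hre, neg_mul]

lemma norm_one_sub_lt_one {w : ℂ} {α : ℝ} (hw : w ≠ 0) (hαπ : α ≤ π)
    (harg : |arg w| < α) (hnorm : ‖w‖ < 2 * Real.cos α) : ‖1 - w‖ < 1 := by
  have hw₀ : 0 < ‖w‖ := norm_pos_iff.mpr hw
  have hre : Real.cos α * ‖w‖ < w.re := by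
    have h := cos_lt_cos_of_nonneg_of_le_pi (abs_nonneg _) hαπ harg
    rwa [cos_abs, cos_arg hw, lt_div_iff₀ hw₀] at h
  have hsq : ‖1 - w‖ ^ 2 = 1 - 2 * w.re + ‖w‖ ^ 2 := by
    simp only [Complex.sq_norm, normSq_apply, sub_re, sub_im, one_re, one_im]
    ring
  rw [← sq_lt_one_iff₀ (norm_nonneg _), hsq]
  nlinarith

end Complex

lemma convex_setOf_abs_im_lt_mul_re (t : ℝ) : Convex ℝ {w : ℂ | |w.im| < t * w.re} := by
  have hlin (s : ℝ) : IsLinearMap ℝ fun w : ℂ ↦ s * w.im - t * w.re :=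
    ⟨fun x y ↦ by simp only [add_im, add_re]; ring,
      fun c x ↦ by simp only [real_smul, re_ofReal_mul, im_ofReal_mul, smul_eq_mul]; ring⟩
  have hset : {w : ℂ | |w.im| < t * w.re} =
      {w | 1 * w.im - t * w.re < 0} ∩ {w | -1 * w.im - t * w.re < 0} := by
    ext w
    simp only [mem_ofPred_eq, mem_inter_iff, abs_lt]
    constructor <;> rintro ⟨h₁, h₂⟩ <;> constructor <;> linarith
  rw [hset]
  exact (convex_halfSpace_lt (hlin 1) 0).inter (convex_halfSpace_lt (hlin (-1)) 0)

def puncturedDiskNhd (t₀ : ℂ) (ε : ℝ) : Set ℂ := {z | ‖z‖ < 1 ∧ 0 < ‖z - t₀‖ ∧ ‖z - t₀‖ < ε}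

def stolzAngle (t₀ : ℂ) (ε α : ℝ) : Set ℂ :=
  {z | z ∈ puncturedDiskNhd t₀ ε ∧ |arg ((z - t₀) / (-t₀))| < α}

lemma isOpen_puncturedDiskNhd (t₀ : ℂ) (ε : ℝ) : IsOpen (puncturedDiskNhd t₀ ε) :=
  (isOpen_lt continuous_norm continuous_const).inter <|
    (isOpen_lt continuous_const (continuous_id.sub continuous_const).norm).inter
      (isOpen_lt (continuous_id.sub continuous_const).norm continuous_const)

lemma stolzAngle_mono {t₀ : ℂ} {ε α β : ℝ} (h : α ≤ β) : stolzAngle t₀ ε α ⊆ stolzAngle t₀ ε β :=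
  fun _ hz ↦ ⟨hz.1, hz.2.trans_le h⟩

section UnitCircle

variable {t₀ : ℂ}

lemma mul_one_sub_ofReal_mem_stolzAngle (ht₀ : ‖t₀‖ = 1) {ε α s : ℝ} (hα : 0 < α)
    (hs₀ : 0 < s) (hs₁ : s < 1) (hsε : s < ε) : t₀ * (1 - s) ∈ stolzAngle t₀ ε α := by
  have ht₀' : t₀ ≠ 0 := norm_ne_zero_iff.mp (by simp [ht₀])
  have hsub : t₀ * (1 - s) - t₀ = -t₀ * s := by ring
  have hnorm : ‖t₀ * (1 - s) - t₀‖ = s := by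
    rw [hsub, norm_mul, norm_neg, ht₀, one_mul, norm_real, Real.norm_of_nonneg hs₀.le]
  refine ⟨⟨?_, by rwa [hnorm], by rwa [hnorm]⟩, ?_⟩
  · rw [norm_mul, ht₀, one_mul, ← ofReal_one, ← ofReal_sub, norm_real,
      Real.norm_of_nonneg (by linarith)]
    linarith
  · rw [hsub, mul_div_cancel_left₀ _ (neg_ne_zero.mpr ht₀'), arg_ofReal_of_nonneg hs₀.le,
      abs_zero]
    exact hα

lemma nhdsWithin_stolzAngle_neBot (ht₀ : ‖t₀‖ = 1) {ε α : ℝ} (hε : 0 < ε) (hα : 0 < α) :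
    (𝓝[stolzAngle t₀ ε α] t₀).NeBot := by
  rw [← mem_closure_iff_nhdsWithin_neBot]
  have hlim : Tendsto (fun s : ℝ ↦ t₀ * (1 - s)) (𝓝[>] 0) (𝓝 t₀) :=
    ((Continuous.tendsto' (by fun_prop) 0 t₀ (by simp))).mono_left nhdsWithin_le_nhds
  refine mem_closure_of_tendsto hlim ?_
  filter_upwards [Ioo_mem_nhdsGT (lt_min hε one_pos)] with s ⟨hs₀, hs⟩
  exact mul_one_sub_ofReal_mem_stolzAngle ht₀ hα hs₀ (hs.trans_le (min_le_right _ _))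
    (hs.trans_le (min_le_left _ _))

lemma ball_inter_stolzAngle_eq (ht₀ : ‖t₀‖ = 1) {ε α δ : ℝ} (hα₀ : 0 < α) (hα : α < π / 2)
    (hδε : δ ≤ ε) (hδα : δ ≤ Real.cos α) :
    ball t₀ δ ∩ stolzAngle t₀ ε α =
      ball t₀ δ ∩ (fun z ↦ (z - t₀) / (-t₀)) ⁻¹' {w | |w.im| < Real.tan α * w.re} := by
  have ht₀' : t₀ ≠ 0 := norm_ne_zero_iff.mp (by simp [ht₀])
  ext z
  set w := (z - t₀) / (-t₀) with hw_def
  have hw_norm : ‖w‖ = ‖z - t₀‖ := by simp [hw_def, ht₀]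
  have hz_norm : ‖z‖ = ‖1 - w‖ := by
    rw [hw_def, one_sub_div (neg_ne_zero.mpr ht₀'), norm_div, norm_neg, ht₀, div_one,
      show -t₀ - (z - t₀) = -z by ring, norm_neg]
  simp only [mem_inter_iff, mem_ball, dist_eq_norm, mem_preimage, mem_ofPred_eq]
  constructor
  · rintro ⟨hball, ⟨-, hpos, -⟩, harg⟩
    refine ⟨hball, (abs_arg_lt_iff_abs_im_lt hα₀ hα ?_).mp harg⟩
    rwa [← norm_pos_iff, hw_norm]
  · rintro ⟨hball, hcone⟩
    have hw : w ≠ 0 := by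
      intro hw
      rw [hw_def] at hw
      simp [hw] at hcone
    have hcos : 0 < Real.cos α := Real.cos_pos_of_mem_Ioo ⟨by linarith, hα⟩
    have harg := (abs_arg_lt_iff_abs_im_lt hα₀ hα hw).mpr hcone
    refine ⟨hball, ⟨?_, ?_, hball.trans_le hδε⟩, harg⟩
    · rw [hz_norm]
      exact norm_one_sub_lt_one hw (by linarith) harg (by linarith)
    · rwa [← hw_norm, norm_pos_iff]

lemma convex_ball_inter_stolzAngle (ht₀ : ‖t₀‖ = 1) {ε α δ : ℝ} (hα₀ : 0 < α)
    (hα : α < π / 2) (hδε : δ ≤ ε) (hδα : δ ≤ Real.cos α) :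
    Convex ℝ (ball t₀ δ ∩ stolzAngle t₀ ε α) := by
  rw [ball_inter_stolzAngle_eq ht₀ hα₀ hα hδε hδα]
  have hcomp : (fun z : ℂ ↦ (z - t₀) / (-t₀)) = (fun z ↦ z * (-t₀)⁻¹) ∘ (fun z ↦ z + -t₀) := by
    funext z
    simp only [Function.comp_apply, div_eq_mul_inv, sub_eq_add_neg]
  rw [hcomp, preimage_comp]
  exact (convex_ball _ _).inter <| ((convex_setOf_abs_im_lt_mul_re _).linear_preimage
    (LinearMap.mulRight ℝ (-t₀)⁻¹)).translate_preimage_left _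

end UnitCircle

lemma UniformContinuousOn.exists_tendsto_nhdsWithin {X Y : Type*} [UniformSpace X]
    [UniformSpace Y] [CompleteSpace Y] {g : X → Y} {s : Set X} {x : X} [(𝓝[s] x).NeBot]
    (hg : UniformContinuousOn g s) : ∃ L, Tendsto g (𝓝[s] x) (𝓝 L) :=
  cauchy_map_iff_exists_tendsto.mp <|
    (cauchy_nhds.mono nhdsWithin_le_nhds).map_of_le hg inf_le_right

section Nontangential

variable {B : Type*} [NormedAddCommGroup B]

def NontangentiallyBounded (g : ℂ → B) (t₀ : ℂ) (ε : ℝ) : Prop :=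
  ∀ α, 0 < α → α < π / 2 → IsBoundedUnder (· ≤ ·) (𝓝[stolzAngle t₀ ε α] t₀) (‖g ·‖)

def HasNontangentialLimit (g : ℂ → B) (t₀ : ℂ) (ε : ℝ) (L : B) : Prop :=
  ∀ α, 0 < α → α < π / 2 → Tendsto g (𝓝[stolzAngle t₀ ε α] t₀) (𝓝 L)

variable {t₀ : ℂ} {ε : ℝ} {g : ℂ → B}

lemma HasNontangentialLimit.nontangentiallyBounded {L : B} (h : HasNontangentialLimit g t₀ ε L) :
    NontangentiallyBounded g t₀ ε :=
  fun α hα₀ hα ↦ (h α hα₀ hα).norm.isBoundedUnder_le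

variable [NormedSpace ℂ B] [CompleteSpace B]

lemma exists_tendsto_nhdsWithin_stolzAngle (ht₀ : ‖t₀‖ = 1) (hε : 0 < ε) {α : ℝ} (hα₀ : 0 < α)
    (hα : α < π / 2) (hg : ∀ z ∈ stolzAngle t₀ ε α, DifferentiableAt ℂ g z)
    (hg' : IsBoundedUnder (· ≤ ·) (𝓝[stolzAngle t₀ ε α] t₀) (‖deriv g ·‖)) :
    ∃ L, Tendsto g (𝓝[stolzAngle t₀ ε α] t₀) (𝓝 L) := by
  obtain ⟨C, hC⟩ := hg'
  obtain ⟨r, hr, hCr⟩ := Metric.mem_nhdsWithin_iff.mp (eventually_map.mp hC)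
  set δ := min r (min ε (Real.cos α))
  have hδ : 0 < δ := lt_min hr (lt_min hε (Real.cos_pos_of_mem_Ioo ⟨by linarith, hα⟩))
  set K := ball t₀ δ ∩ stolzAngle t₀ ε α
  have hK : 𝓝[K] t₀ = 𝓝[stolzAngle t₀ ε α] t₀ :=
    nhdsWithin_inter_of_mem (mem_nhdsWithin_of_mem_nhds (ball_mem_nhds _ hδ))
  have hlip : LipschitzOnWith C.toNNReal g K := by
    refine (convex_ball_inter_stolzAngle ht₀ hα₀ hα ((min_le_right _ _).trans (min_le_left _ _))
      ((min_le_right _ _).trans (min_le_right _ _))).lipschitzOnWith_of_nnnorm_deriv_le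
      (fun z hz ↦ hg z hz.2) fun z hz ↦ ?_
    have hzC : ‖deriv g z‖ ≤ C :=
      hCr ⟨ball_subset_ball (min_le_left _ _) hz.1, hz.2⟩
    rw [← NNReal.coe_le_coe, coe_nnnorm]
    exact hzC.trans (Real.le_coe_toNNReal C)
  have := nhdsWithin_stolzAngle_neBot ht₀ hε hα₀
  rw [← hK] at this ⊢
  exact hlip.uniformContinuousOn.exists_tendsto_nhdsWithin

lemma NontangentiallyBounded.exists_hasNontangentialLimit (ht₀ : ‖t₀‖ = 1) (hε : 0 < ε)
    (hg : ∀ z ∈ puncturedDiskNhd t₀ ε, DifferentiableAt ℂ g z)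
    (hg' : NontangentiallyBounded (deriv g) t₀ ε) : ∃ L, HasNontangentialLimit g t₀ ε L := by
  choose L hL using fun α (hα₀ : 0 < α) (hα : α < π / 2) ↦
    exists_tendsto_nhdsWithin_stolzAngle ht₀ hε hα₀ hα (fun z hz ↦ hg z hz.1) (hg' α hα₀ hα)
  have hπ₀ : 0 < π / 4 := by positivity
  have hπ : π / 4 < π / 2 := by linarith [pi_pos]
  refine ⟨L (π / 4) hπ₀ hπ, fun α hα₀ hα ↦ ?_⟩
  convert hL α hα₀ hα using 2
  -- both limits are also limits along the narrower angle of half-angle `min α (π / 4)`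
  have := nhdsWithin_stolzAngle_neBot ht₀ hε (lt_min hα₀ hπ₀)
  exact tendsto_nhds_unique
    ((hL _ hπ₀ hπ).mono_left (nhdsWithin_mono _ (stolzAngle_mono (min_le_right _ _))))
    ((hL α hα₀ hα).mono_left (nhdsWithin_mono _ (stolzAngle_mono (min_le_left _ _))))

end Nontangential

/-- If a Banach-space-valued function `f`, holomorphic on the punctured neighborhood
`U_{t₀,ε} = {z ∈ 𝔻 : 0 < |z - t₀| < ε}` of a boundary point `t₀`, has its `n`-th derivative
bounded in every Stolz angle at `t₀`, then the nontangential limits of `f^{(j)}` at `t₀`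
exist for all `j = 0, …, n-1` (each limit being independent of the Stolz angle). -/
theorem nontangential_limits_of_bounded_derivative
    {B : Type*} [NormedAddCommGroup B] [NormedSpace ℂ B] [CompleteSpace B]
    (f : ℂ → B) (t₀ : ℂ) (ht₀ : ‖t₀‖ = 1) (ε : ℝ) (hε : 0 < ε) (n : ℕ) (hn : 1 ≤ n)
    (hf : DifferentiableOn ℂ f
      {z : ℂ | ‖z‖ < 1 ∧ 0 < ‖z - t₀‖ ∧ ‖z - t₀‖ < ε})
    (hbdd : ∀ α : ℝ, 0 < α → α < Real.pi / 2 →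
      ∃ γ : ℝ, ∀ z : ℂ,
        (‖z‖ < 1 ∧ 0 < ‖z - t₀‖ ∧ ‖z - t₀‖ < ε) →
        |Complex.arg ((z - t₀) / (-t₀))| < α →
        ‖iteratedDeriv n f z‖ ≤ γ) :
    ∀ j : ℕ, j ≤ n - 1 →
      ∃ L : B, ∀ α : ℝ, 0 < α → α < Real.pi / 2 →
        Tendsto (iteratedDeriv j f)
          (nhdsWithin t₀
            {z : ℂ | (‖z‖ < 1 ∧ 0 < ‖z - t₀‖ ∧ ‖z - t₀‖ < ε)
              ∧ |Complex.arg ((z - t₀) / (-t₀))| < α})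
          (nhds L) := by
  have hanalytic := hf.analyticOnNhd (isOpen_puncturedDiskNhd t₀ ε)
  have hdiff (k : ℕ) : ∀ z ∈ puncturedDiskNhd t₀ ε, DifferentiableAt ℂ (iteratedDeriv k f) z := by
    rw [iteratedDeriv_eq_iterate]
    exact fun z hz ↦ (hanalytic.iterated_deriv k z hz).differentiableAt
  have hstep (k : ℕ) (hk : NontangentiallyBounded (iteratedDeriv (k + 1) f) t₀ ε) :
      ∃ L, HasNontangentialLimit (iteratedDeriv k f) t₀ ε L := by
    rw [iteratedDeriv_succ] at hk
    exact hk.exists_hasNontangentialLimit ht₀ hε (hdiff k)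
  have hbounded (k : ℕ) (hk : k ≤ n) : NontangentiallyBounded (iteratedDeriv k f) t₀ ε := by
    induction hk using Nat.decreasingInduction with
    | self =>
      intro α hα₀ hα
      obtain ⟨γ, hγ⟩ := hbdd α hα₀ hα
      exact isBoundedUnder_of_eventually_le <|
        eventually_nhdsWithin_of_forall fun z hz ↦ hγ z hz.1 hz.2
    | of_succ k _ ih =>
      obtain ⟨L, hL⟩ := hstep k ih
      exact hL.nontangentiallyBounded
  intro j hj
  exact hstep j (hbounded (j + 1) (by omega))
end
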